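/- Let Σ = [[Σ11, Σ12],[Σ21, Σ22]] be the characteristic function arising from an AIP_S-admissible data set via the Redheffer construction (in particular Σ22(0) = 0). Assume the multiplication operator M_{Σ12} : Hol_{Δ̃*}(D) → Hol_Y(D) has trivial kernel and M_{Σ21} : Hol_U(D) → Hol_{Δ̃}(D) has dense range. Then the Redheffer transform R_Σ : S(Δ̃, Δ̃*) → S(U,Y), ℰ ↦ Σ11 + Σ12(I − ℰΣ22)^{-1}ℰΣ21, is injective, and for every ℰ ∈ S(Δ̃, Δ̃*) the multiplication operator M_G : H(K_ℰ) → H(K_S) with G(z) = Σ12(z)(I − ℰ(z)Σ22(z))^{-1} and S = R_Σ[ℰ] has trivial kernel. -/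

import Mathlib

/-!
The colligation is contractive, so `Σ22(z)` has norm at most `|z|` (a Schwarz lemma for
transfer functions with `D = 0`), and `I − ℰ(z)Σ22(z)` is invertible with a holomorphic inverse
for every Schur-class `ℰ`.

Injectivity of `R_Σ`: if `R_Σ[ℰ₁] = R_Σ[ℰ₂]`, then `Σ12 F₁ Σ21 = Σ12 F₂ Σ21` for the holomorphic
functions `Fᵢ = (I − ℰᵢΣ22)⁻¹ℰᵢ`. Since `M_{Σ12}` is injective, `(F₁ − F₂)(z)` vanishes on the
values `Σ21(z)h(z)`, which are dense, so `F₁ = F₂`. Then `ℰ` is recovered from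
`F = (I − ℰΣ22)⁻¹ℰ` as `ℰ = F(I − Σ22ℰ)`, because `I + Σ22F` is a right inverse of `I − Σ22ℰ`.

Kernel of `M_G`: `G f = Σ12 · (I − ℰΣ22)⁻¹f`, and the second factor is holomorphic because every
`f ∈ H(K_ℰ)` is. The kernel functions are holomorphic and span a dense subspace, and point
evaluation is bounded by `(1 − |z|)⁻¹‖f‖`, so norm limits converge locally uniformly. Hence
injectivity of `M_{Σ12}` forces `f = 0`.
-/

open ContinuousLinearMap Metric
open scoped InnerProductSpace ComplexOrder

noncomputable section

/-- The de Branges–Rovnyak kernel `K_S(z,ζ) = (I − S(z)S(ζ)*)/(1 − z ζ̄)`. -/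
def dbrKernel {U Y : Type*}
    [NormedAddCommGroup U] [InnerProductSpace ℂ U] [CompleteSpace U]
    [NormedAddCommGroup Y] [InnerProductSpace ℂ Y] [CompleteSpace Y]
    (S : ℂ → (U →L[ℂ] Y)) (z ζ : ℂ) : Y →L[ℂ] Y :=
  (1 - z * (starRingEnd ℂ) ζ)⁻¹ • (1 - (S z) ∘L (adjoint (S ζ)))

/-- The operator-valued Schur class on the unit disk. -/
def IsSchur {U Y : Type*}
    [NormedAddCommGroup U] [NormedSpace ℂ U]
    [NormedAddCommGroup Y] [NormedSpace ℂ Y]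
    (S : ℂ → (U →L[ℂ] Y)) : Prop :=
  AnalyticOnNhd ℂ S (ball (0:ℂ) 1) ∧ ∀ z ∈ ball (0:ℂ) 1, ‖S z‖ ≤ 1

/-- `H` (with realization map `J` and kernel elements `k`) is the reproducing kernel
Hilbert space of the de Branges–Rovnyak kernel `K_S`. -/
structure IsDBRSpace {U Y : Type*}
    [NormedAddCommGroup U] [InnerProductSpace ℂ U] [CompleteSpace U]
    [NormedAddCommGroup Y] [InnerProductSpace ℂ Y] [CompleteSpace Y]
    (S : ℂ → (U →L[ℂ] Y)) (H : Type*) [NormedAddCommGroup H]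
    [InnerProductSpace ℂ H] [CompleteSpace H]
    (J : H →ₗ[ℂ] (ℂ → Y)) (k : ℂ → Y → H) : Prop where
  ext : ∀ f g : H, (∀ z ∈ ball (0:ℂ) 1, J f z = J g z) → f = g
  kernel_eq : ∀ ζ ∈ ball (0:ℂ) 1, ∀ y : Y, ∀ z ∈ ball (0:ℂ) 1,
    J (k ζ y) z = dbrKernel S z ζ y
  reproducing : ∀ ζ ∈ ball (0:ℂ) 1, ∀ (y : Y) (f : H),
    ⟪k ζ y, f⟫_ℂ = ⟪y, J f ζ⟫_ℂ

/-- The rank-one operator `x x* : y ↦ ⟨y, x⟩ x`. -/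
def rankOne {X : Type*} [NormedAddCommGroup X] [InnerProductSpace ℂ X]
    (x : X) : X →L[ℂ] X :=
  (innerSL ℂ x).smulRight x

/-- A transfer-function block `z ↦ D + z C (I − zA)^{-1} B`. -/
def tblock {X0 V W : Type*}
    [NormedAddCommGroup X0] [NormedSpace ℂ X0] [CompleteSpace X0]
    [NormedAddCommGroup V] [NormedSpace ℂ V]
    [NormedAddCommGroup W] [NormedSpace ℂ W]
    (A : X0 →L[ℂ] X0) (B : V →L[ℂ] X0) (C : X0 →L[ℂ] W) (D : V →L[ℂ] W)
    (z : ℂ) : V →L[ℂ] W :=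
  D + z • (C ∘L (Ring.inverse (1 - z • A)) ∘L B)

/-- The Redheffer linear-fractional transform
`R_Σ[ℰ] = Σ11 + Σ12 (I − ℰ Σ22)^{-1} ℰ Σ21` associated with the colligation
`[[A,B1,B2],[C1,D11,D12],[C2,D21,0]]`. -/
def redheffer {U Y X0 Dt Ds : Type*}
    [NormedAddCommGroup U] [NormedSpace ℂ U]
    [NormedAddCommGroup Y] [NormedSpace ℂ Y]
    [NormedAddCommGroup X0] [NormedSpace ℂ X0] [CompleteSpace X0]
    [NormedAddCommGroup Dt] [NormedSpace ℂ Dt] [CompleteSpace Dt]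
    [NormedAddCommGroup Ds] [NormedSpace ℂ Ds] [CompleteSpace Ds]
    (A : X0 →L[ℂ] X0) (B1 : U →L[ℂ] X0) (B2 : Ds →L[ℂ] X0)
    (C1 : X0 →L[ℂ] Y) (C2 : X0 →L[ℂ] Dt)
    (D11 : U →L[ℂ] Y) (D12 : Ds →L[ℂ] Y) (D21 : U →L[ℂ] Dt)
    (ℰ : ℂ → (Dt →L[ℂ] Ds)) (z : ℂ) : U →L[ℂ] Y :=
  tblock A B1 C1 D11 z +
    (tblock A B2 C1 D12 z) ∘L
      (Ring.inverse (1 - (ℰ z) ∘L (tblock A B2 C2 0 z))) ∘L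
        ((ℰ z) ∘L (tblock A B1 C2 D21 z))

/-- The unitary colligation `U = [[A,B1,B2],[C1,D11,D12],[C2,D21,0]]` obtained from the
`AIP_S`-admissible data set `{P,T,E,N}` via the construction of the Abstract
Interpolation Problem: here `ρ : X → X0` plays the role of `P^{1/2} : X → X0` with
`X0 = closure Ran P^{1/2}` (so `ρ` has dense range and `ρ* ρ = P`), the block operator
is unitary, it implements the isometry `V [P^{1/2}x; Nx] = [P^{1/2}Tx; Ex]`, the third
input column is a unitary identification of `Δ̃*` with the defect space
`Δ* = (X0 ⊕ Y) ⊖ R_V`, and the adjoint of the third output row is a unitary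
identification of `Δ̃` with the defect space `Δ = (X0 ⊕ U) ⊖ D_V`. -/
structure IsRedhefferColligation
    {X U Y X0 Dt Ds : Type*}
    [NormedAddCommGroup X] [InnerProductSpace ℂ X] [CompleteSpace X]
    [NormedAddCommGroup U] [InnerProductSpace ℂ U] [CompleteSpace U]
    [NormedAddCommGroup Y] [InnerProductSpace ℂ Y] [CompleteSpace Y]
    [NormedAddCommGroup X0] [InnerProductSpace ℂ X0] [CompleteSpace X0]
    [NormedAddCommGroup Dt] [InnerProductSpace ℂ Dt] [CompleteSpace Dt]
    [NormedAddCommGroup Ds] [InnerProductSpace ℂ Ds] [CompleteSpace Ds]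
    (P T : X →L[ℂ] X) (E : X →L[ℂ] Y) (N : X →L[ℂ] U)
    (ρ : X →L[ℂ] X0)
    (A : X0 →L[ℂ] X0) (B1 : U →L[ℂ] X0) (B2 : Ds →L[ℂ] X0)
    (C1 : X0 →L[ℂ] Y) (C2 : X0 →L[ℂ] Dt)
    (D11 : U →L[ℂ] Y) (D12 : Ds →L[ℂ] Y) (D21 : U →L[ℂ] Dt) : Prop where
  rho_dense : DenseRange ρ
  rho_sq : adjoint ρ ∘L ρ = P
  isometric : ∀ (x0 : X0) (u : U) (d : Ds),
    ‖A x0 + B1 u + B2 d‖ ^ 2 + ‖C1 x0 + D11 u + D12 d‖ ^ 2 + ‖C2 x0 + D21 u‖ ^ 2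
      = ‖x0‖ ^ 2 + ‖u‖ ^ 2 + ‖d‖ ^ 2
  coisometric : ∀ (x0 : X0) (y : Y) (d : Dt),
    ‖adjoint A x0 + adjoint C1 y + adjoint C2 d‖ ^ 2
      + ‖adjoint B1 x0 + adjoint D11 y + adjoint D21 d‖ ^ 2
      + ‖adjoint B2 x0 + adjoint D12 y‖ ^ 2
      = ‖x0‖ ^ 2 + ‖y‖ ^ 2 + ‖d‖ ^ 2
  collig1 : ∀ x : X, A (ρ x) + B1 (N x) = ρ (T x)
  collig2 : ∀ x : X, C1 (ρ x) + D11 (N x) = E x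
  collig3 : ∀ x : X, C2 (ρ x) + D21 (N x) = 0
  defect_star : ∀ (d : Ds) (x : X), ⟪B2 d, ρ (T x)⟫_ℂ + ⟪D12 d, E x⟫_ℂ = 0
  defect_star_iso : ∀ d : Ds, ‖B2 d‖ ^ 2 + ‖D12 d‖ ^ 2 = ‖d‖ ^ 2
  defect_star_onto : ∀ (x0 : X0) (y : Y),
    (∀ x : X, ⟪x0, ρ (T x)⟫_ℂ + ⟪y, E x⟫_ℂ = 0) → ∃ d : Ds, B2 d = x0 ∧ D12 d = y
  defect : ∀ (d : Dt) (x : X), ⟪adjoint C2 d, ρ x⟫_ℂ + ⟪adjoint D21 d, N x⟫_ℂ = 0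
  defect_iso : ∀ d : Dt, ‖adjoint C2 d‖ ^ 2 + ‖adjoint D21 d‖ ^ 2 = ‖d‖ ^ 2
  defect_onto : ∀ (x0 : X0) (u : U),
    (∀ x : X, ⟪x0, ρ x⟫_ℂ + ⟪u, N x⟫_ℂ = 0) →
      ∃ d : Dt, adjoint C2 d = x0 ∧ adjoint D21 d = u


/-- The function `G(z) = Σ12(z)(I − ℰ(z)Σ22(z))^{-1}`. -/
def Gfun {U Y X0 Dt Ds : Type*}
    [NormedAddCommGroup U] [NormedSpace ℂ U]
    [NormedAddCommGroup Y] [NormedSpace ℂ Y]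
    [NormedAddCommGroup X0] [NormedSpace ℂ X0] [CompleteSpace X0]
    [NormedAddCommGroup Dt] [NormedSpace ℂ Dt] [CompleteSpace Dt]
    [NormedAddCommGroup Ds] [NormedSpace ℂ Ds] [CompleteSpace Ds]
    (A : X0 →L[ℂ] X0) (B2 : Ds →L[ℂ] X0)
    (C1 : X0 →L[ℂ] Y) (C2 : X0 →L[ℂ] Dt) (D12 : Ds →L[ℂ] Y)
    (ℰ : ℂ → (Dt →L[ℂ] Ds)) (z : ℂ) : Ds →L[ℂ] Y :=
  (tblock A B2 C1 D12 z) ∘L (Ring.inverse (1 - (ℰ z) ∘L (tblock A B2 C2 0 z)))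

section TransferFunction

variable {X0 V W : Type*}
  [NormedAddCommGroup X0] [NormedSpace ℂ X0]
  [NormedAddCommGroup V] [NormedSpace ℂ V] [NormedAddCommGroup W] [NormedSpace ℂ W]

def IsContractiveColligation (A : X0 →L[ℂ] X0) (B : V →L[ℂ] X0) (C : X0 →L[ℂ] W) : Prop :=
  ∀ x d, ‖A x + B d‖ ^ 2 + ‖C x‖ ^ 2 ≤ ‖x‖ ^ 2 + ‖d‖ ^ 2

variable {A : X0 →L[ℂ] X0}

lemma IsContractiveColligation.norm_le_one {B : V →L[ℂ] X0} {C : X0 →L[ℂ] W}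
    (hcon : IsContractiveColligation A B C) : ‖A‖ ≤ 1 := by
  refine opNorm_le_bound _ zero_le_one fun x => ?_
  have h := hcon x 0
  simp only [map_zero, add_zero, norm_zero] at h
  nlinarith [norm_nonneg (A x), norm_nonneg x, norm_nonneg (C x)]

variable [CompleteSpace X0]

lemma isUnit_one_sub_smul_of_norm_le_one (hA : ‖A‖ ≤ 1) {z : ℂ} (hz : z ∈ ball (0:ℂ) 1) :
    IsUnit (1 - z • A) := by
  refine isUnit_one_sub_of_norm_lt_one ?_
  calc ‖z • A‖ ≤ ‖z‖ * 1 := by rw [norm_smul]; gcongr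
    _ < 1 := by simpa using hz

lemma differentiableOn_tblock (hA : ‖A‖ ≤ 1) (B : V →L[ℂ] X0) (C : X0 →L[ℂ] W)
    (D : V →L[ℂ] W) : DifferentiableOn ℂ (tblock A B C D) (ball (0:ℂ) 1) := by
  intro z hz
  have hres : DifferentiableAt ℂ (fun z : ℂ => Ring.inverse (1 - z • A)) z :=
    (by fun_prop : DifferentiableAt ℂ (fun z : ℂ => 1 - z • A) z).inverse
      (isUnit_one_sub_smul_of_norm_le_one hA hz)
  exact ((differentiableAt_const D).add
    (differentiableAt_id.smul ((differentiableAt_const C).clm_comp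
      (hres.clm_comp (differentiableAt_const B))))).differentiableWithinAt

variable {B : V →L[ℂ] X0} {C : X0 →L[ℂ] W}

lemma IsContractiveColligation.norm_tblock_zero_le
    (hcon : IsContractiveColligation A B C)
    {z : ℂ} (hz : z ∈ ball (0:ℂ) 1) : ‖tblock A B C 0 z‖ ≤ ‖z‖ := by
  refine opNorm_le_bound _ (norm_nonneg z) fun d => ?_
  set x := Ring.inverse (1 - z • A) (B d)
  have hx : z • A x + B d = x := by
    have h := congrArg (fun T : X0 →L[ℂ] X0 => T (B d)) (Ring.mul_inverse_cancel _
      (isUnit_one_sub_smul_of_norm_le_one hcon.norm_le_one hz))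
    simp only [mul_apply_eq_comp, sub_apply, smul_apply, one_apply_eq_self] at h
    rw [← h]; abel
  have hCx : ‖C x‖ ^ 2 ≤ ‖x‖ ^ 2 := by
    have h := hcon x 0
    simp only [map_zero, add_zero, norm_zero] at h
    nlinarith [norm_nonneg (A x)]
  -- Contractivity at `(z x, d)` gives `(1 - |z|²)‖x‖² + |z|²‖C x‖² ≤ ‖d‖²`; with `‖C x‖ ≤ ‖x‖`
  -- this yields `‖C x‖ ≤ ‖d‖`.
  have hzd := hcon (z • x) d
  rw [map_smul, hx, map_smul, norm_smul, norm_smul] at hzd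
  have htb : tblock A B C 0 z d = z • C x := by simp [tblock, x]
  rw [htb, norm_smul]
  have hz1 : ‖z‖ < 1 := by simpa using hz
  have hCd : ‖C x‖ ≤ ‖d‖ := by
    refine le_of_pow_le_pow_left₀ two_ne_zero (norm_nonneg d) ?_
    nlinarith [mul_le_mul_of_nonneg_left hCx
      (sub_nonneg.2 (pow_le_one₀ (norm_nonneg z) hz1.le (n := 2)))]
  gcongr

end TransferFunction

section InverseOneSubComp

variable {E F : Type*} [NormedAddCommGroup E] [NormedSpace ℂ E]
  [NormedAddCommGroup F] [NormedSpace ℂ F]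

lemma apply_ringInverse_apply {u : E →L[ℂ] E} (hu : IsUnit u) (y : E) :
    u (Ring.inverse u y) = y :=
  congr($(Ring.mul_inverse_cancel u hu) y)

lemma ringInverse_apply_apply {u : E →L[ℂ] E} (hu : IsUnit u) (y : E) :
    Ring.inverse u (u y) = y :=
  congr($(Ring.inverse_mul_cancel u hu) y)

variable {e e₁ e₂ : F →L[ℂ] E} {w : E →L[ℂ] F}

lemma comp_one_add_comp_inverse_one_sub_comp (he : IsUnit (1 - e ∘L w)) :
    e ∘L (1 + w ∘L (Ring.inverse (1 - e ∘L w) ∘L e)) = Ring.inverse (1 - e ∘L w) ∘L e := by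
  ext x
  have h := apply_ringInverse_apply he (e x)
  simp only [sub_apply, one_apply_eq_self, comp_apply] at h
  simp only [comp_apply, add_apply, one_apply_eq_self, map_add]
  exact (sub_eq_iff_eq_add.mp h).symm

lemma inverse_one_sub_comp_comp_comp_one_sub_comp (he : IsUnit (1 - e ∘L w)) :
    (Ring.inverse (1 - e ∘L w) ∘L e) ∘L (1 - w ∘L e) = e := by
  ext x
  have h : e ((1 - w ∘L e) x) = (1 - e ∘L w) (e x) := by simp
  rw [comp_apply, comp_apply, h, ringInverse_apply_apply he]

lemma eq_of_inverse_one_sub_comp_comp_eq (h₁ : IsUnit (1 - e₁ ∘L w))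
    (h₂ : IsUnit (1 - e₂ ∘L w))
    (h : Ring.inverse (1 - e₁ ∘L w) ∘L e₁ = Ring.inverse (1 - e₂ ∘L w) ∘L e₂) : e₁ = e₂ := by
  set f := Ring.inverse (1 - e₂ ∘L w) ∘L e₂
  have hf₁ : f ∘L (1 - w ∘L e₁) = e₁ := h ▸ inverse_one_sub_comp_comp_comp_one_sub_comp h₁
  have hright : (1 + w ∘L f) ∘L (1 - w ∘L e₁) = 1 := by
    rw [add_comp, comp_assoc, hf₁, one_def, id_comp, ← one_def]; abel
  calc e₁ = f ∘L (1 - w ∘L e₁) := hf₁.symm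
    _ = (e₂ ∘L (1 + w ∘L f)) ∘L (1 - w ∘L e₁) := by
        rw [comp_one_add_comp_inverse_one_sub_comp h₂]
    _ = e₂ := by rw [comp_assoc, hright, one_def, comp_id]

end InverseOneSubComp

section Parameter

variable {X0 V W : Type*}
  [NormedAddCommGroup X0] [NormedSpace ℂ X0] [CompleteSpace X0]
  [NormedAddCommGroup V] [NormedSpace ℂ V] [CompleteSpace V]
  [NormedAddCommGroup W] [NormedSpace ℂ W]
  {A : X0 →L[ℂ] X0} {B : V →L[ℂ] X0} {C : X0 →L[ℂ] W} {ℰ : ℂ → (W →L[ℂ] V)}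

lemma IsContractiveColligation.isUnit_one_sub_comp_tblock
    (hcon : IsContractiveColligation A B C)
    {z : ℂ} (hz : z ∈ ball (0:ℂ) 1) (hℰ : ‖ℰ z‖ ≤ 1) :
    IsUnit (1 - ℰ z ∘L tblock A B C 0 z) := by
  refine isUnit_one_sub_of_norm_lt_one ?_
  calc ‖ℰ z ∘L tblock A B C 0 z‖ ≤ 1 * ‖z‖ :=
        (opNorm_comp_le _ _).trans (mul_le_mul hℰ (hcon.norm_tblock_zero_le hz)
          (norm_nonneg _) zero_le_one)
    _ < 1 := by simpa using hz

lemma IsContractiveColligation.differentiableOn_inverse_one_sub_comp_tblock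
    (hcon : IsContractiveColligation A B C) (hℰ : IsSchur ℰ) :
    DifferentiableOn ℂ (fun z => Ring.inverse (1 - ℰ z ∘L tblock A B C 0 z))
      (ball (0:ℂ) 1) := by
  intro z hz
  have hW := (differentiableOn_tblock hcon.norm_le_one B C 0).differentiableAt
    (isOpen_ball.mem_nhds hz)
  exact (((differentiableAt_const 1).sub ((hℰ.1 z hz).differentiableAt.clm_comp hW)).inverse
    (hcon.isUnit_one_sub_comp_tblock hz (hℰ.2 z hz))).differentiableWithinAt

lemma IsContractiveColligation.differentiableOn_inverse_one_sub_comp_tblock_comp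
    (hcon : IsContractiveColligation A B C) (hℰ : IsSchur ℰ) :
    DifferentiableOn ℂ (fun z => Ring.inverse (1 - ℰ z ∘L tblock A B C 0 z) ∘L ℰ z)
      (ball (0:ℂ) 1) :=
  (hcon.differentiableOn_inverse_one_sub_comp_tblock hℰ).clm_comp hℰ.1.differentiableOn

end Parameter

section MultiplicationOperator

variable {U Y Dt Ds : Type*}
  [NormedAddCommGroup U] [NormedSpace ℂ U] [NormedAddCommGroup Y] [NormedSpace ℂ Y]
  [NormedAddCommGroup Dt] [NormedSpace ℂ Dt] [NormedAddCommGroup Ds] [NormedSpace ℂ Ds]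
  [CompleteSpace Ds]

lemma eqOn_of_comp_apply_comp_eq {Φ : ℂ → (Ds →L[ℂ] Y)} {Ψ : ℂ → (U →L[ℂ] Dt)}
    (hΨ : DifferentiableOn ℂ Ψ (ball (0:ℂ) 1))
    (hker : ∀ h : ℂ → Ds, AnalyticOnNhd ℂ h (ball (0:ℂ) 1) →
      (∀ z ∈ ball (0:ℂ) 1, Φ z (h z) = 0) → ∀ z ∈ ball (0:ℂ) 1, h z = 0)
    (hdense : ∀ g : ℂ → Dt, AnalyticOnNhd ℂ g (ball (0:ℂ) 1) →
      ∀ Kc : Set ℂ, IsCompact Kc → Kc ⊆ ball (0:ℂ) 1 → ∀ ε : ℝ, 0 < ε →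
        ∃ h : ℂ → U, AnalyticOnNhd ℂ h (ball (0:ℂ) 1) ∧ ∀ z ∈ Kc, ‖Ψ z (h z) - g z‖ < ε)
    {F₁ F₂ : ℂ → (Dt →L[ℂ] Ds)} (hF₁ : DifferentiableOn ℂ F₁ (ball (0:ℂ) 1))
    (hF₂ : DifferentiableOn ℂ F₂ (ball (0:ℂ) 1))
    (hF : ∀ z ∈ ball (0:ℂ) 1, ∀ u, Φ z (F₁ z (Ψ z u)) = Φ z (F₂ z (Ψ z u))) :
    Set.EqOn F₁ F₂ (ball (0:ℂ) 1) := by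
  intro z hz
  rw [← sub_eq_zero]
  ext d
  change d ∈ ((F₁ z - F₂ z).ker : Set Dt)
  rw [← (F₁ z - F₂ z).isClosed_ker.closure_eq, Metric.mem_closure_iff]
  intro ε hε
  obtain ⟨h, hh, hclose⟩ := hdense (fun _ => d) analyticOnNhd_const {z} isCompact_singleton
    (Set.singleton_subset_iff.2 hz) ε hε
  refine ⟨Ψ z (h z), ?_, by simpa [dist_eq_norm'] using hclose z rfl⟩
  have hq : DifferentiableOn ℂ (fun w => (F₁ w - F₂ w) (Ψ w (h w))) (ball (0:ℂ) 1) :=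
    fun w hw => ((hF₁ w hw).sub (hF₂ w hw)).clm_apply
      ((hΨ w hw).clm_apply (hh w hw).differentiableAt.differentiableWithinAt)
  refine hker _ (hq.analyticOnNhd isOpen_ball) (fun w hw => ?_) z hz
  rw [sub_apply, map_sub, hF w hw, sub_self]

end MultiplicationOperator

section HolomorphicFunctionSpace

variable {H E : Type*} [NormedAddCommGroup H] [NormedSpace ℂ H]
  [NormedAddCommGroup E] [NormedSpace ℂ E] [CompleteSpace E]

lemma isClosed_setOf_differentiableOn_apply {s : Set ℂ} (hs : IsOpen s) (J : H →ₗ[ℂ] (ℂ → E))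
    {c : ℂ → ℝ} (hc : ContinuousOn c s) (hJ : ∀ f, ∀ z ∈ s, ‖J f z‖ ≤ c z * ‖f‖) :
    IsClosed {f | DifferentiableOn ℂ (J f) s} := by
  refine isClosed_of_closure_subset fun f hf => ?_
  obtain ⟨g, hg, hgf⟩ := mem_closure_iff_seq_limit.mp hf
  refine TendstoLocallyUniformlyOn.differentiableOn (φ := Filter.atTop) ?_
    (Filter.Eventually.of_forall hg) hs
  rw [tendstoLocallyUniformlyOn_iff_forall_isCompact hs]
  intro K hKs hK
  obtain ⟨M, hM⟩ := hK.exists_bound_of_continuousOn (hc.mono hKs)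
  have hlim := (tendsto_iff_norm_sub_tendsto_zero.mp hgf).const_mul M
  rw [mul_zero] at hlim
  rw [Metric.tendstoUniformlyOn_iff]
  intro ε hε
  filter_upwards [hlim.eventually (gt_mem_nhds hε)] with n hn z hz
  calc dist (J f z) (J (g n) z) = ‖J (g n - f) z‖ := by
        rw [dist_eq_norm', map_sub, Pi.sub_apply]
    _ ≤ c z * ‖g n - f‖ := hJ _ z (hKs hz)
    _ ≤ M * ‖g n - f‖ := by gcongr; exact (le_abs_self _).trans (hM z hz)
    _ < ε := hn

end HolomorphicFunctionSpace

namespace IsDBRSpace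

variable {Dt Ds HE : Type*}
  [NormedAddCommGroup Dt] [InnerProductSpace ℂ Dt] [CompleteSpace Dt]
  [NormedAddCommGroup Ds] [InnerProductSpace ℂ Ds] [CompleteSpace Ds]
  [NormedAddCommGroup HE] [InnerProductSpace ℂ HE] [CompleteSpace HE]
  {ℰ : ℂ → (Dt →L[ℂ] Ds)} {J : HE →ₗ[ℂ] (ℂ → Ds)} {k : ℂ → Ds → HE}

lemma norm_kernel_sq (hH : IsDBRSpace ℰ HE J k) {z : ℂ} (hz : z ∈ ball (0:ℂ) 1) (v : Ds) :
    ‖k z v‖ ^ 2 = (1 - ‖z‖ ^ 2)⁻¹ * (‖v‖ ^ 2 - ‖adjoint (ℰ z) v‖ ^ 2) := by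
  have hJ : J (k z v) z = (((1 - ‖z‖ ^ 2)⁻¹ : ℝ) : ℂ) • (v - ℰ z (adjoint (ℰ z) v)) := by
    rw [hH.kernel_eq z hz v z hz, dbrKernel, Complex.mul_conj']
    push_cast
    simp
  rw [← inner_self_eq_norm_sq (𝕜 := ℂ), hH.reproducing z hz v, hJ, inner_smul_right,
    inner_sub_right, ← adjoint_inner_left, RCLike.re_to_complex, Complex.re_ofReal_mul,
    Complex.sub_re, ← RCLike.re_to_complex, ← RCLike.re_to_complex, inner_self_eq_norm_sq,
    inner_self_eq_norm_sq]

lemma norm_kernel_le (hH : IsDBRSpace ℰ HE J k) {z : ℂ} (hz : z ∈ ball (0:ℂ) 1) (v : Ds) :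
    ‖k z v‖ ≤ (1 - ‖z‖)⁻¹ * ‖v‖ := by
  have hz1 : ‖z‖ < 1 := by simpa using hz
  have hc0 : 0 < 1 - ‖z‖ ^ 2 := by nlinarith [norm_nonneg z]
  have hsq : ‖k z v‖ ^ 2 ≤ ((1 - ‖z‖)⁻¹ * ‖v‖) ^ 2 := by
    have hc : (1 - ‖z‖ ^ 2)⁻¹ ≤ ((1 - ‖z‖) ^ 2)⁻¹ :=
      inv_anti₀ (by nlinarith) (by nlinarith [norm_nonneg z])
    rw [hH.norm_kernel_sq hz, mul_pow, inv_pow]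
    calc (1 - ‖z‖ ^ 2)⁻¹ * (‖v‖ ^ 2 - ‖adjoint (ℰ z) v‖ ^ 2) ≤ (1 - ‖z‖ ^ 2)⁻¹ * ‖v‖ ^ 2 := by
          gcongr; nlinarith [sq_nonneg ‖adjoint (ℰ z) v‖]
      _ ≤ ((1 - ‖z‖) ^ 2)⁻¹ * ‖v‖ ^ 2 := by gcongr
  exact le_of_pow_le_pow_left₀ two_ne_zero (by have := sub_pos.2 hz1; positivity) hsq

lemma norm_apply_le (hH : IsDBRSpace ℰ HE J k) (f : HE) {z : ℂ} (hz : z ∈ ball (0:ℂ) 1) :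
    ‖J f z‖ ≤ (1 - ‖z‖)⁻¹ * ‖f‖ := by
  set v := J f z
  have hsq : ‖v‖ * ‖v‖ ≤ ‖v‖ * ((1 - ‖z‖)⁻¹ * ‖f‖) := by
    calc ‖v‖ * ‖v‖ = RCLike.re ⟪k z v, f⟫_ℂ := by
          rw [hH.reproducing z hz, ← sq, ← inner_self_eq_norm_sq (𝕜 := ℂ)]
      _ ≤ ‖k z v‖ * ‖f‖ := (RCLike.re_le_norm _).trans (norm_inner_le_norm _ _)
      _ ≤ (1 - ‖z‖)⁻¹ * ‖v‖ * ‖f‖ := by gcongr; exact hH.norm_kernel_le hz v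
      _ = ‖v‖ * ((1 - ‖z‖)⁻¹ * ‖f‖) := by ring
  rcases (norm_nonneg v).eq_or_lt with hv | hv
  · have hz1 : 0 < 1 - ‖z‖ := sub_pos.2 (by simpa using hz)
    rw [← hv]
    positivity
  · exact le_of_mul_le_mul_left hsq hv

lemma differentiableOn_kernel (hH : IsDBRSpace ℰ HE J k)
    (hℰ : DifferentiableOn ℂ ℰ (ball (0:ℂ) 1)) {ζ : ℂ} (hζ : ζ ∈ ball (0:ℂ) 1) (d : Ds) :
    DifferentiableOn ℂ (J (k ζ d)) (ball (0:ℂ) 1) := by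
  have hformula : Set.EqOn
      (fun z => (1 - z * (starRingEnd ℂ) ζ)⁻¹ • (d - ℰ z (adjoint (ℰ ζ) d))) (J (k ζ d))
      (ball (0:ℂ) 1) := by
    intro z hz
    rw [hH.kernel_eq ζ hζ d z hz, dbrKernel]
    simp
  refine DifferentiableOn.congr (fun z hz => ?_) hformula.symm
  have hne : 1 - z * (starRingEnd ℂ) ζ ≠ 0 := by
    refine sub_ne_zero.2 (fun h => ?_)
    have hz1 : ‖z‖ < 1 := by simpa using hz
    have hζ1 : ‖ζ‖ < 1 := by simpa using hζ
    have h1 : ‖z * (starRingEnd ℂ) ζ‖ < 1 := by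
      rw [norm_mul, Complex.norm_conj]
      exact mul_lt_one_of_nonneg_of_lt_one_left (norm_nonneg z) hz1 hζ1.le
    rw [← h, norm_one] at h1
    exact lt_irrefl _ h1
  have hscalar : DifferentiableWithinAt ℂ (fun z : ℂ => (1 - z * (starRingEnd ℂ) ζ)⁻¹)
      (ball (0:ℂ) 1) z :=
    ((differentiableWithinAt_const 1).sub (differentiableWithinAt_id.mul_const _)).inv hne
  exact hscalar.smul
    ((differentiableWithinAt_const d).sub ((hℰ z hz).clm_apply (differentiableWithinAt_const _)))

lemma span_kernel_dense (hH : IsDBRSpace ℰ HE J k) :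
    (Submodule.span ℂ {f | ∃ ζ ∈ ball (0:ℂ) 1, ∃ d, k ζ d = f}).topologicalClosure = ⊤ := by
  rw [Submodule.topologicalClosure_eq_top_iff, Submodule.eq_bot_iff]
  intro g hg
  refine hH.ext g 0 fun ζ hζ => ?_
  have h0 : ⟪k ζ (J g ζ), g⟫_ℂ = 0 := hg _ (Submodule.subset_span ⟨ζ, hζ, J g ζ, rfl⟩)
  rw [hH.reproducing ζ hζ, inner_self_eq_zero] at h0
  rw [h0, map_zero, Pi.zero_apply]

lemma differentiableOn_apply (hH : IsDBRSpace ℰ HE J k)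
    (hℰ : DifferentiableOn ℂ ℰ (ball (0:ℂ) 1)) (f : HE) :
    DifferentiableOn ℂ (J f) (ball (0:ℂ) 1) := by
  let holo : Submodule ℂ HE :=
    { carrier := {f | DifferentiableOn ℂ (J f) (ball (0:ℂ) 1)}
      add_mem' := fun {f g} hf hg => by
        show DifferentiableOn ℂ (J (f + g)) _
        rw [map_add]
        exact hf.add hg
      zero_mem' := by
        show DifferentiableOn ℂ (J 0) _
        rw [map_zero]
        exact differentiableOn_const (0 : Ds)
      smul_mem' := fun c f hf => by
        show DifferentiableOn ℂ (J (c • f)) _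
        rw [map_smul]
        exact hf.const_smul c }
  have hclosed : IsClosed (holo : Set HE) :=
    isClosed_setOf_differentiableOn_apply isOpen_ball J
      ((continuousOn_const.sub continuous_norm.continuousOn).inv₀ fun z hz =>
        (sub_pos.2 (by simpa using hz)).ne') fun f z hz => hH.norm_apply_le f hz
  have hspan : Submodule.span ℂ {f | ∃ ζ ∈ ball (0:ℂ) 1, ∃ d, k ζ d = f} ≤ holo :=
    Submodule.span_le.2 fun _ ⟨ζ, hζ, d, hf⟩ => hf ▸ hH.differentiableOn_kernel hℰ hζ d
  have := Submodule.topologicalClosure_minimal _ hspan hclosed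
  rw [hH.span_kernel_dense, top_le_iff] at this
  exact (this.symm ▸ Submodule.mem_top : f ∈ holo)

end IsDBRSpace

section RedhefferTransform

variable {U Y X0 Dt Ds : Type*}
  [NormedAddCommGroup U] [NormedSpace ℂ U] [NormedAddCommGroup Y] [NormedSpace ℂ Y]
  [NormedAddCommGroup X0] [NormedSpace ℂ X0] [CompleteSpace X0]
  [NormedAddCommGroup Dt] [NormedSpace ℂ Dt] [CompleteSpace Dt]
  [NormedAddCommGroup Ds] [NormedSpace ℂ Ds] [CompleteSpace Ds]
  {A : X0 →L[ℂ] X0} {B1 : U →L[ℂ] X0} {B2 : Ds →L[ℂ] X0} {C1 : X0 →L[ℂ] Y}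
  {C2 : X0 →L[ℂ] Dt} {D11 : U →L[ℂ] Y} {D12 : Ds →L[ℂ] Y} {D21 : U →L[ℂ] Dt}

lemma eqOn_of_redheffer_eqOn
    (hcon : IsContractiveColligation A B2 C2)
    (hker : ∀ h : ℂ → Ds, AnalyticOnNhd ℂ h (ball (0:ℂ) 1) →
      (∀ z ∈ ball (0:ℂ) 1, tblock A B2 C1 D12 z (h z) = 0) →
      ∀ z ∈ ball (0:ℂ) 1, h z = 0)
    (hdense : ∀ g : ℂ → Dt, AnalyticOnNhd ℂ g (ball (0:ℂ) 1) →
      ∀ Kc : Set ℂ, IsCompact Kc → Kc ⊆ ball (0:ℂ) 1 → ∀ ε : ℝ, 0 < ε →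
        ∃ h : ℂ → U, AnalyticOnNhd ℂ h (ball (0:ℂ) 1) ∧
          ∀ z ∈ Kc, ‖tblock A B1 C2 D21 z (h z) - g z‖ < ε)
    {ℰ₁ ℰ₂ : ℂ → (Dt →L[ℂ] Ds)} (h₁ : IsSchur ℰ₁) (h₂ : IsSchur ℰ₂)
    (h : ∀ z ∈ ball (0:ℂ) 1,
      redheffer A B1 B2 C1 C2 D11 D12 D21 ℰ₁ z = redheffer A B1 B2 C1 C2 D11 D12 D21 ℰ₂ z) :
    ∀ z ∈ ball (0:ℂ) 1, ℰ₁ z = ℰ₂ z := by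
  have hparam := eqOn_of_comp_apply_comp_eq
    (differentiableOn_tblock hcon.norm_le_one B1 C2 D21) hker hdense
    (hcon.differentiableOn_inverse_one_sub_comp_tblock_comp h₁)
    (hcon.differentiableOn_inverse_one_sub_comp_tblock_comp h₂)
    fun z hz u => congr($(add_left_cancel (h z hz)) u)
  intro z hz
  exact eq_of_inverse_one_sub_comp_comp_eq (hcon.isUnit_one_sub_comp_tblock hz (h₁.2 z hz))
    (hcon.isUnit_one_sub_comp_tblock hz (h₂.2 z hz)) (hparam hz)

end RedhefferTransform

section MultiplicationByG

variable {U Y X0 Dt Ds HE : Type*}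
  [NormedAddCommGroup U] [NormedSpace ℂ U] [NormedAddCommGroup Y] [NormedSpace ℂ Y]
  [NormedAddCommGroup X0] [NormedSpace ℂ X0] [CompleteSpace X0]
  [NormedAddCommGroup Dt] [InnerProductSpace ℂ Dt] [CompleteSpace Dt]
  [NormedAddCommGroup Ds] [InnerProductSpace ℂ Ds] [CompleteSpace Ds]
  [NormedAddCommGroup HE] [InnerProductSpace ℂ HE] [CompleteSpace HE]
  {A : X0 →L[ℂ] X0} {B2 : Ds →L[ℂ] X0} {C1 : X0 →L[ℂ] Y} {C2 : X0 →L[ℂ] Dt}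
  {D12 : Ds →L[ℂ] Y}

lemma eq_zero_of_Gfun_apply_eq_zero
    (hcon : IsContractiveColligation A B2 C2)
    (hker : ∀ h : ℂ → Ds, AnalyticOnNhd ℂ h (ball (0:ℂ) 1) →
      (∀ z ∈ ball (0:ℂ) 1, tblock A B2 C1 D12 z (h z) = 0) →
      ∀ z ∈ ball (0:ℂ) 1, h z = 0)
    {ℰ : ℂ → (Dt →L[ℂ] Ds)} (hℰ : IsSchur ℰ) {J : HE →ₗ[ℂ] (ℂ → Ds)} {k : ℂ → Ds → HE}
    (hH : IsDBRSpace ℰ HE J k) {f : HE}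
    (hf : ∀ z ∈ ball (0:ℂ) 1, Gfun (U := U) A B2 C1 C2 D12 ℰ z (J f z) = 0) : f = 0 := by
  have hq := hker _ (((hcon.differentiableOn_inverse_one_sub_comp_tblock hℰ).clm_apply
    (hH.differentiableOn_apply hℰ.1.differentiableOn f)).analyticOnNhd isOpen_ball) hf
  refine hH.ext f 0 fun z hz => ?_
  rw [map_zero, Pi.zero_apply, ← apply_ringInverse_apply
    (hcon.isUnit_one_sub_comp_tblock hz (hℰ.2 z hz)) (J f z), hq z hz, map_zero]

end MultiplicationByG

lemma IsRedhefferColligation.isContractiveColligation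
    {X U Y X0 Dt Ds : Type*}
    [NormedAddCommGroup X] [InnerProductSpace ℂ X] [CompleteSpace X]
    [NormedAddCommGroup U] [InnerProductSpace ℂ U] [CompleteSpace U]
    [NormedAddCommGroup Y] [InnerProductSpace ℂ Y] [CompleteSpace Y]
    [NormedAddCommGroup X0] [InnerProductSpace ℂ X0] [CompleteSpace X0]
    [NormedAddCommGroup Dt] [InnerProductSpace ℂ Dt] [CompleteSpace Dt]
    [NormedAddCommGroup Ds] [InnerProductSpace ℂ Ds] [CompleteSpace Ds]
    {P T : X →L[ℂ] X} {E : X →L[ℂ] Y} {N : X →L[ℂ] U} {ρ : X →L[ℂ] X0}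
    {A : X0 →L[ℂ] X0} {B1 : U →L[ℂ] X0} {B2 : Ds →L[ℂ] X0} {C1 : X0 →L[ℂ] Y}
    {C2 : X0 →L[ℂ] Dt} {D11 : U →L[ℂ] Y} {D12 : Ds →L[ℂ] Y} {D21 : U →L[ℂ] Dt}
    (hcol : IsRedhefferColligation P T E N ρ A B1 B2 C1 C2 D11 D12 D21) :
    IsContractiveColligation A B2 C2 := by
  intro x d
  have h := hcol.isometric x 0 d
  simp only [map_zero, add_zero, norm_zero] at h
  nlinarith [sq_nonneg ‖C1 x + D12 d‖]

theorem stmt9_general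
    {X U Y X0 Dt Ds : Type*}
    [NormedAddCommGroup X] [InnerProductSpace ℂ X] [CompleteSpace X]
    [NormedAddCommGroup U] [InnerProductSpace ℂ U] [CompleteSpace U]
    [NormedAddCommGroup Y] [InnerProductSpace ℂ Y] [CompleteSpace Y]
    [NormedAddCommGroup X0] [InnerProductSpace ℂ X0] [CompleteSpace X0]
    [NormedAddCommGroup Dt] [InnerProductSpace ℂ Dt] [CompleteSpace Dt]
    [NormedAddCommGroup Ds] [InnerProductSpace ℂ Ds] [CompleteSpace Ds]
    -- the `AIP_S`-admissible data set
    (P T : X →L[ℂ] X) (E : X →L[ℂ] Y) (N : X →L[ℂ] U)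
    -- the unitary colligation constructed from `{P,T,E,N}`
    (ρ : X →L[ℂ] X0)
    (A : X0 →L[ℂ] X0) (B1 : U →L[ℂ] X0) (B2 : Ds →L[ℂ] X0)
    (C1 : X0 →L[ℂ] Y) (C2 : X0 →L[ℂ] Dt)
    (D11 : U →L[ℂ] Y) (D12 : Ds →L[ℂ] Y) (D21 : U →L[ℂ] Dt)
    (hcol : IsRedhefferColligation P T E N ρ A B1 B2 C1 C2 D11 D12 D21)
    -- `M_{Σ12} : Hol_{Δ̃*}(D) → Hol_Y(D)` has trivial kernel
    (hker : ∀ h : ℂ → Ds, AnalyticOnNhd ℂ h (ball (0:ℂ) 1) →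
      (∀ z ∈ ball (0:ℂ) 1, tblock A B2 C1 D12 z (h z) = 0) →
      ∀ z ∈ ball (0:ℂ) 1, h z = 0)
    -- `M_{Σ21} : Hol_U(D) → Hol_{Δ̃}(D)` has dense range
    (hdense : ∀ g : ℂ → Dt, AnalyticOnNhd ℂ g (ball (0:ℂ) 1) →
      ∀ Kc : Set ℂ, IsCompact Kc → Kc ⊆ ball (0:ℂ) 1 → ∀ ε : ℝ, 0 < ε →
        ∃ h : ℂ → U, AnalyticOnNhd ℂ h (ball (0:ℂ) 1) ∧
          ∀ z ∈ Kc, ‖tblock A B1 C2 D21 z (h z) - g z‖ < ε)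
    -- an arbitrary parameter `ℰ ∈ S(Δ̃,Δ̃*)` together with the space `H(K_ℰ)`
    (ℰ : ℂ → (Dt →L[ℂ] Ds)) (hℰ : IsSchur ℰ)
    (HE : Type*) [NormedAddCommGroup HE] [InnerProductSpace ℂ HE] [CompleteSpace HE]
    (JE : HE →ₗ[ℂ] (ℂ → Ds)) (kE : ℂ → Ds → HE) (hHE : IsDBRSpace ℰ HE JE kE) :
    -- the Redheffer transform is injective
    (∀ ℰ₁ ℰ₂ : ℂ → (Dt →L[ℂ] Ds), IsSchur ℰ₁ → IsSchur ℰ₂ →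
      (∀ z ∈ ball (0:ℂ) 1,
        redheffer A B1 B2 C1 C2 D11 D12 D21 ℰ₁ z
          = redheffer A B1 B2 C1 C2 D11 D12 D21 ℰ₂ z) →
      ∀ z ∈ ball (0:ℂ) 1, ℰ₁ z = ℰ₂ z) ∧
    -- the multiplication operator `M_G : H(K_ℰ) → H(K_S)` has trivial kernel
    (∀ h : HE,
      (∀ z ∈ ball (0:ℂ) 1, Gfun (U := U) A B2 C1 C2 D12 ℰ z (JE h z) = 0) →
      h = 0) :=
  ⟨fun _ _ h₁ h₂ => eqOn_of_redheffer_eqOn hcol.isContractiveColligation hker hdense h₁ h₂,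
    fun _ => eq_zero_of_Gfun_apply_eq_zero hcol.isContractiveColligation hker hℰ hHE⟩

/-- Let `Σ` be the characteristic function arising from an
`AIP_S`-admissible data set via the Redheffer construction.  Assume that the
multiplication operator `M_{Σ12} : Hol_{Δ̃*}(D) → Hol_Y(D)` has trivial kernel and that
`M_{Σ21} : Hol_U(D) → Hol_{Δ̃}(D)` has dense range (in the topology of uniform
convergence on compact subsets of `D`).  Then the Redheffer transform
`R_Σ : S(Δ̃,Δ̃*) → S(U,Y)` is injective and, for every `ℰ ∈ S(Δ̃,Δ̃*)` (here realized
by the universally quantified data `ℰ, HE, JE, kE`), the multiplication operator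
`M_G : H(K_ℰ) → H(K_S)` (with `G(z) = Σ12(z)(I − ℰ(z)Σ22(z))^{-1}` and `S = R_Σ[ℰ]`)
has trivial kernel. -/
theorem stmt9
    {X U Y X0 Dt Ds : Type*}
    [NormedAddCommGroup X] [InnerProductSpace ℂ X] [CompleteSpace X]
    [NormedAddCommGroup U] [InnerProductSpace ℂ U] [CompleteSpace U]
    [NormedAddCommGroup Y] [InnerProductSpace ℂ Y] [CompleteSpace Y]
    [NormedAddCommGroup X0] [InnerProductSpace ℂ X0] [CompleteSpace X0]
    [NormedAddCommGroup Dt] [InnerProductSpace ℂ Dt] [CompleteSpace Dt]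
    [NormedAddCommGroup Ds] [InnerProductSpace ℂ Ds] [CompleteSpace Ds]
    -- the `AIP_S`-admissible data set
    (P T : X →L[ℂ] X) (E : X →L[ℂ] Y) (N : X →L[ℂ] U)
    (hPpos : P.IsPositive)
    (hStein : P - adjoint T ∘L P ∘L T = adjoint E ∘L E - adjoint N ∘L N)
    (OET : X → ℂ → Y) (ONT : X → ℂ → U)
    (hOET : ∀ x0 : X, ∀ z ∈ ball (0:ℂ) 1,
      HasSum (fun n : ℕ => z ^ n • E ((T ^ n) x0)) (OET x0 z))
    (hONT : ∀ x0 : X, ∀ z ∈ ball (0:ℂ) 1,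
      HasSum (fun n : ℕ => z ^ n • N ((T ^ n) x0)) (ONT x0 z))
    -- the unitary colligation constructed from `{P,T,E,N}`
    (ρ : X →L[ℂ] X0)
    (A : X0 →L[ℂ] X0) (B1 : U →L[ℂ] X0) (B2 : Ds →L[ℂ] X0)
    (C1 : X0 →L[ℂ] Y) (C2 : X0 →L[ℂ] Dt)
    (D11 : U →L[ℂ] Y) (D12 : Ds →L[ℂ] Y) (D21 : U →L[ℂ] Dt)
    (hcol : IsRedhefferColligation P T E N ρ A B1 B2 C1 C2 D11 D12 D21)
    -- `M_{Σ12} : Hol_{Δ̃*}(D) → Hol_Y(D)` has trivial kernel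
    (hker : ∀ h : ℂ → Ds, AnalyticOnNhd ℂ h (ball (0:ℂ) 1) →
      (∀ z ∈ ball (0:ℂ) 1, tblock A B2 C1 D12 z (h z) = 0) →
      ∀ z ∈ ball (0:ℂ) 1, h z = 0)
    -- `M_{Σ21} : Hol_U(D) → Hol_{Δ̃}(D)` has dense range
    (hdense : ∀ g : ℂ → Dt, AnalyticOnNhd ℂ g (ball (0:ℂ) 1) →
      ∀ Kc : Set ℂ, IsCompact Kc → Kc ⊆ ball (0:ℂ) 1 → ∀ ε : ℝ, 0 < ε →
        ∃ h : ℂ → U, AnalyticOnNhd ℂ h (ball (0:ℂ) 1) ∧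
          ∀ z ∈ Kc, ‖tblock A B1 C2 D21 z (h z) - g z‖ < ε)
    -- an arbitrary parameter `ℰ ∈ S(Δ̃,Δ̃*)` together with the space `H(K_ℰ)`
    (ℰ : ℂ → (Dt →L[ℂ] Ds)) (hℰ : IsSchur ℰ)
    (HE : Type*) [NormedAddCommGroup HE] [InnerProductSpace ℂ HE] [CompleteSpace HE]
    (JE : HE →ₗ[ℂ] (ℂ → Ds)) (kE : ℂ → Ds → HE) (hHE : IsDBRSpace ℰ HE JE kE) :
    -- the Redheffer transform is injective
    (∀ ℰ₁ ℰ₂ : ℂ → (Dt →L[ℂ] Ds), IsSchur ℰ₁ → IsSchur ℰ₂ →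
      (∀ z ∈ ball (0:ℂ) 1,
        redheffer A B1 B2 C1 C2 D11 D12 D21 ℰ₁ z
          = redheffer A B1 B2 C1 C2 D11 D12 D21 ℰ₂ z) →
      ∀ z ∈ ball (0:ℂ) 1, ℰ₁ z = ℰ₂ z) ∧
    -- the multiplication operator `M_G : H(K_ℰ) → H(K_S)` has trivial kernel
    (∀ h : HE,
      (∀ z ∈ ball (0:ℂ) 1, Gfun (U := U) A B2 C1 C2 D12 ℰ z (JE h z) = 0) →
      h = 0) :=
  stmt9_general P T E N ρ A B1 B2 C1 C2 D11 D12 D21 hcol hker hdense ℰ hℰ HE JE kE hHE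

end
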